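/- arXiv:0809.0246 — 5 statements merged into one kernel-verified Lean document; each statement's English description precedes it below -/
import Mathlib

section
/- Let φ, ψ : [0,∞) → ℝ satisfy φ(s) + t·ψ(s) ≥ φ(t) + t·ψ(t) for all s, t ≥ 0. Then φ is right-differentiable at 0 with derivative 0, i.e., lim_{t→0⁺} (φ(t) − φ(0))/t = 0. -/
open Filter Topology Set

/-!
Swapping `s` and `t` in the minimality inequality shows that `ψ` is antitone on `[0, ∞)`, so it
has a right limit `ψ(0⁺)`. Chaining the inequality from `0` through `u` to `t` gives
`φ t - φ 0 ≤ t (ψ u - ψ t) + u (ψ 0 - ψ u)` for all `u, t ≥ 0`; letting `u → 0⁺` yields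
`φ t - φ 0 ≤ t (ψ(0⁺) - ψ t)`, while `(s, t) = (t, 0)` gives `φ 0 ≤ φ t`. Hence
`0 ≤ (φ t - φ 0) / t ≤ ψ(0⁺) - ψ t → 0`.
-/

lemma AntitoneOn.exists_tendsto_nhdsGT {f : ℝ → ℝ} {a : ℝ} (hf : AntitoneOn f (Ici a)) :
    ∃ L, Tendsto f (𝓝[>] a) (𝓝 L) := by
  have hbdd : BddAbove (f '' Ioi a) :=
    ⟨f a, forall_mem_image.2 fun _ hu ↦ hf self_mem_Ici (mem_Ici.2 hu.le) hu.le⟩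
  exact ⟨_, (hf.mono Ioi_subset_Ici_self).tendsto_nhdsGT hbdd⟩

section Minimizer

variable {φ ψ : ℝ → ℝ}

lemma antitoneOn_Ici_of_minimizer
    (hmin : ∀ s t : ℝ, 0 ≤ s → 0 ≤ t → φ t + t * ψ t ≤ φ s + t * ψ s) :
    AntitoneOn ψ (Ici 0) := by
  intro u hu t ht hut
  rcases hut.eq_or_lt with rfl | hlt
  · rfl
  have key : (ψ t - ψ u) * (t - u) ≤ 0 := by linarith [hmin u t hu ht, hmin t u ht hu]
  linarith [nonpos_of_mul_nonpos_left key (sub_pos.2 hlt)]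

lemma le_of_minimizer
    (hmin : ∀ s t : ℝ, 0 ≤ s → 0 ≤ t → φ t + t * ψ t ≤ φ s + t * ψ s) {t : ℝ} (ht : 0 ≤ t) :
    φ 0 ≤ φ t := by
  simpa using hmin t 0 ht le_rfl

lemma sub_le_add_of_minimizer
    (hmin : ∀ s t : ℝ, 0 ≤ s → 0 ≤ t → φ t + t * ψ t ≤ φ s + t * ψ s) {u t : ℝ}
    (hu : 0 ≤ u) (ht : 0 ≤ t) :
    φ t - φ 0 ≤ t * (ψ u - ψ t) + u * (ψ 0 - ψ u) := by
  linarith [hmin u t hu ht, hmin 0 u le_rfl hu]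

lemma sub_le_mul_of_minimizer
    (hmin : ∀ s t : ℝ, 0 ≤ s → 0 ≤ t → φ t + t * ψ t ≤ φ s + t * ψ s) {L : ℝ}
    (hL : Tendsto ψ (𝓝[>] 0) (𝓝 L)) {t : ℝ} (ht : 0 ≤ t) :
    φ t - φ 0 ≤ t * (L - ψ t) := by
  have hlim : Tendsto (fun u ↦ t * (ψ u - ψ t) + u * (ψ 0 - ψ u)) (𝓝[>] 0)
      (𝓝 (t * (L - ψ t) + 0 * (ψ 0 - L))) :=
    ((hL.sub_const _).const_mul t).add
      ((tendsto_id.mono_left nhdsWithin_le_nhds).mul (hL.const_sub _))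
  refine ge_of_tendsto (by simpa using hlim) ?_
  filter_upwards [self_mem_nhdsWithin] with u hu using sub_le_add_of_minimizer hmin hu.le ht

end Minimizer

/-- Abstract Theorem 2.6: `φ` is right-differentiable at `0` with derivative `0`. -/
theorem phi_right_deriv_zero (φ ψ : ℝ → ℝ)
    (hmin : ∀ s t : ℝ, 0 ≤ s → 0 ≤ t → φ t + t * ψ t ≤ φ s + t * ψ s) :
    Tendsto (fun t : ℝ => (φ t - φ 0) / t) (𝓝[>] (0 : ℝ)) (𝓝 0) := by
  obtain ⟨L, hL⟩ := (antitoneOn_Ici_of_minimizer hmin).exists_tendsto_nhdsGT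
  have hupper : Tendsto (fun t ↦ L - ψ t) (𝓝[>] 0) (𝓝 0) := by
    simpa using hL.const_sub L
  refine tendsto_of_tendsto_of_tendsto_of_le_of_le' tendsto_const_nhds hupper ?_ ?_
  · filter_upwards [self_mem_nhdsWithin] with t ht
    exact div_nonneg (sub_nonneg.2 (le_of_minimizer hmin ht.le)) ht.le
  · filter_upwards [self_mem_nhdsWithin] with t ht
    rw [div_le_iff₀ ht, mul_comm]
    exact sub_le_mul_of_minimizer hmin hL ht.le
end

section
/- Let φ, ψ : [0,∞) → ℝ satisfy φ(s) + t·ψ(s) ≥ φ(t) + t·ψ(t) for all s, t ≥ 0, and set S(t) = φ(t) + t·ψ(t). Then S is right-differentiable at 0 and S'(0⁺) = lim_{t→0⁺} ψ(t) = ψ(0⁺). -/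
/-!
Writing `S t = φ t + t ψ t`, the hypothesis says `S t ≤ S s + (t - s) ψ s` for `s, t ≥ 0`:
`ψ s` is the slope of a line through `(s, S s)` lying above the graph of `S`. Comparing two such
lines shows that `ψ` is antitone, so `L = ψ(0⁺)` exists. The supporting line at `t` gives
`ψ t ≤ (S t - S 0) / t`; those at `0` and at `u > 0` give
`S t - S 0 ≤ (t - u) ψ u + u ψ 0`, whose limit as `u → 0⁺` is `t L`. Squeezing gives the claim.
-/

open Filter Topology Set

def HasSupergradientOn (S ψ : ℝ → ℝ) (s : Set ℝ) : Prop :=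
  ∀ a ∈ s, ∀ b ∈ s, S b ≤ S a + (b - a) * ψ a

namespace HasSupergradientOn

variable {S ψ : ℝ → ℝ} {s : Set ℝ} {a : ℝ}

theorem antitoneOn (h : HasSupergradientOn S ψ s) : AntitoneOn ψ s := by
  intro x hx y hy hxy
  rcases hxy.eq_or_lt with rfl | hlt
  · rfl
  nlinarith [h x hx y hy, h y hy x hx]

theorem tendsto_nhdsGT (h : HasSupergradientOn S ψ (Ici a)) :
    ∃ L, Tendsto ψ (𝓝[>] a) (𝓝 L) := by
  have hanti : AntitoneOn ψ (Ioi a) := h.antitoneOn.mono Ioi_subset_Ici_self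
  have hbdd : BddAbove (ψ '' Ioi a) := by
    refine ⟨ψ a, ?_⟩
    rintro _ ⟨u, hu, rfl⟩
    exact h.antitoneOn self_mem_Ici (mem_Ici.2 hu.le) hu.le
  exact ⟨_, hanti.tendsto_nhdsGT hbdd⟩

theorem le_slope (h : HasSupergradientOn S ψ (Ici a)) {t : ℝ} (ht : a < t) :
    ψ t ≤ (S t - S a) / (t - a) := by
  rw [le_div_iff₀ (sub_pos.2 ht)]
  linarith [h t (mem_Ici.2 ht.le) a self_mem_Ici]

theorem slope_le_of_tendsto (h : HasSupergradientOn S ψ (Ici a)) {L : ℝ}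
    (hL : Tendsto ψ (𝓝[>] a) (𝓝 L)) {t : ℝ} (ht : a < t) :
    (S t - S a) / (t - a) ≤ L := by
  rw [div_le_iff₀ (sub_pos.2 ht)]
  have hbound : ∀ u ∈ Ioi a, S t - S a ≤ (t - u) * ψ u + (u - a) * ψ a := fun u hu => by
    linarith [h u (mem_Ici.2 (hu.le)) t (mem_Ici.2 ht.le),
      h a self_mem_Ici u (mem_Ici.2 (hu.le))]
  have hlim : Tendsto (fun u => (t - u) * ψ u + (u - a) * ψ a) (𝓝[>] a) (𝓝 ((t - a) * L)) := by
    have hu : Tendsto (fun u : ℝ => u) (𝓝[>] a) (𝓝 a) := nhdsWithin_le_nhds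
    simpa using ((tendsto_const_nhds.sub hu).mul hL).add ((hu.sub_const a).mul_const (ψ a))
  rw [mul_comm]
  exact ge_of_tendsto hlim (eventually_nhdsWithin_of_forall hbound)

theorem tendsto_slope (h : HasSupergradientOn S ψ (Ici a)) {L : ℝ}
    (hL : Tendsto ψ (𝓝[>] a) (𝓝 L)) :
    Tendsto (fun t => (S t - S a) / (t - a)) (𝓝[>] a) (𝓝 L) :=
  tendsto_of_tendsto_of_tendsto_of_le_of_le' hL tendsto_const_nhds
    (eventually_nhdsWithin_of_forall fun _ ht => h.le_slope ht)
    (eventually_nhdsWithin_of_forall fun _ ht => h.slope_le_of_tendsto hL ht)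

end HasSupergradientOn

/-- Abstract Step 1 of the proof of Theorem 1.1: `S t = φ t + t ψ t` is
right-differentiable at `0` and its right derivative is `ψ(0⁺) = lim_{t→0⁺} ψ t`. -/
theorem S_right_deriv (φ ψ S : ℝ → ℝ)
    (hmin : ∀ s t : ℝ, 0 ≤ s → 0 ≤ t → φ t + t * ψ t ≤ φ s + t * ψ s)
    (hS : ∀ t : ℝ, S t = φ t + t * ψ t) :
    ∃ L : ℝ, Tendsto ψ (𝓝[>] (0 : ℝ)) (𝓝 L) ∧
      Tendsto (fun t : ℝ => (S t - S 0) / t) (𝓝[>] (0 : ℝ)) (𝓝 L) := by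
  have hsup : HasSupergradientOn S ψ (Ici 0) := fun s hs t ht => by
    rw [hS, hS]
    linarith [hmin s t hs ht]
  obtain ⟨L, hL⟩ := hsup.tendsto_nhdsGT
  exact ⟨L, hL, by simpa using hsup.tendsto_slope hL⟩
end

section
/- Fix r > 0, N ≥ 2, 1 < p < ∞. Let S : (r, ∞) → (0, ∞) be differentiable, satisfy S'(R) = −((N−1)/R)·S(R) + 1 − (p−1)·S(R)^{p/(p−1)} for all R > r, and suppose S(R) → +∞ as R → r⁺. Then S(R)^{p/(p−1)} → 1/(p−1) as R → +∞. -/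
open Filter Topology Set

/-!
Write `q = p/(p-1)`. Compare `S` with constant levels `c > 0`. Where `S` stays on one side of
`c`, the drag term `(N-1) S/R` is nonnegative and eventually small, so `S'` is eventually bounded
away from `0` with the sign of `1 - (p-1) c^q`. When this sign points towards `c`, `S` cannot
stay on the far side forever (it would be driven linearly through `c`), and once it reaches `c`
it cannot cross back. Hence `S` eventually lies below every `c` with `(p-1) c^q > 1` and
above every `c` with `(p-1) c^q < 1`, i.e. `S` tends to the root of `(p-1) s^q = 1`.
-/

theorem tendsto_atTop_of_eventually_le_deriv {f f' : ℝ → ℝ} {δ : ℝ} (hδ : 0 < δ)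
    (hf : ∀ᶠ x in atTop, HasDerivAt f (f' x) x) (hf' : ∀ᶠ x in atTop, δ ≤ f' x) :
    Tendsto f atTop atTop := by
  obtain ⟨a, ha⟩ := eventually_atTop.mp (hf.and hf')
  have hlin : ∀ x, a ≤ x → f a + δ * (x - a) ≤ f x := fun x hx =>
    image_le_of_deriv_right_le_deriv_boundary (f := fun x => f a + δ * (x - a)) (b := x)
      (fun y _ => by fun_prop)
      (fun y _ => ((((hasDerivAt_id y).sub_const a).const_mul δ).const_add (f a)).hasDerivWithinAt)
      (by simp) (fun y hy => (ha y hy.1).1.continuousAt.continuousWithinAt)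
      (fun y hy => (ha y hy.1).1.hasDerivWithinAt) (fun y hy => by simpa using (ha y hy.1).2)
      ⟨hx, le_rfl⟩
  refine tendsto_atTop_mono' atTop ?_ (tendsto_atTop_add_const_left _ (f a)
    ((tendsto_atTop_add_const_right _ (-a) tendsto_id).const_mul_atTop hδ))
  filter_upwards [eventually_ge_atTop a] with x hx
  simpa [sub_eq_add_neg] using hlin x hx

theorem eventually_ge_of_frequently_ge {f f' : ℝ → ℝ} {c : ℝ}
    (hf : ∀ᶠ x in atTop, HasDerivAt f (f' x) x) (hc : ∀ᶠ x in atTop, f x = c → 0 < f' x)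
    (hfreq : ∃ᶠ x in atTop, c ≤ f x) : ∀ᶠ x in atTop, c ≤ f x := by
  obtain ⟨a, ha⟩ := eventually_atTop.mp (hf.and hc)
  obtain ⟨b, hab, hb⟩ := (frequently_atTop.mp hfreq) a
  filter_upwards [eventually_ge_atTop b] with x hx
  exact image_le_of_deriv_right_lt_deriv_boundary' (f := fun _ => c) (f' := fun _ => 0)
    continuousOn_const (fun y _ => hasDerivWithinAt_const _ _ _) hb
    (fun y hy => (ha y (hab.trans hy.1)).1.continuousAt.continuousWithinAt)
    (fun y hy => (ha y (hab.trans hy.1)).1.hasDerivWithinAt)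
    (fun y hy hy' => (ha y (hab.trans hy.1)).2 hy'.symm) ⟨hx, le_rfl⟩

theorem eventually_ge_of_le_imp_le_deriv {f f' : ℝ → ℝ} {c δ : ℝ} (hδ : 0 < δ)
    (hf : ∀ᶠ x in atTop, HasDerivAt f (f' x) x) (hc : ∀ᶠ x in atTop, f x ≤ c → δ ≤ f' x) :
    ∀ᶠ x in atTop, c ≤ f x := by
  refine eventually_ge_of_frequently_ge hf (hc.mono fun x hx hfx => hδ.trans_le (hx hfx.le)) ?_
  intro hlt
  simp only [not_le] at hlt
  have hgrow := tendsto_atTop_of_eventually_le_deriv hδ hf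
    (hc.and hlt |>.mono fun x hx => hx.1 hx.2.le)
  exact ((hgrow.eventually_ge_atTop c).and hlt).exists.elim fun x hx => hx.1.not_gt hx.2

theorem eventually_le_of_ge_imp_deriv_le {f f' : ℝ → ℝ} {c δ : ℝ} (hδ : 0 < δ)
    (hf : ∀ᶠ x in atTop, HasDerivAt f (f' x) x) (hc : ∀ᶠ x in atTop, c ≤ f x → f' x ≤ -δ) :
    ∀ᶠ x in atTop, f x ≤ c := by
  have := eventually_ge_of_le_imp_le_deriv (f := -f) (f' := -f') (c := -c) hδ
    (hf.mono fun x hx => hx.neg) (hc.mono fun x hx hfx => by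
      simp only [Pi.neg_apply] at hfx ⊢; linarith [hx (by linarith)])
  exact this.mono fun x hx => by simp only [Pi.neg_apply] at hx; linarith

section

variable {N : ℕ} {p r : ℝ} {S : ℝ → ℝ}

theorem eventually_le_of_one_lt_mul_rpow (hN : 1 ≤ N) (hp : 1 < p)
    (hpos : ∀ R ∈ Ioi r, 0 < S R)
    (hODE : ∀ R ∈ Ioi r,
      HasDerivAt S (-(((N : ℝ) - 1) / R) * S R + 1 - (p - 1) * S R ^ (p / (p - 1))) R)
    {c : ℝ} (hc₀ : 0 ≤ c) (hc : 1 < (p - 1) * c ^ (p / (p - 1))) :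
    ∀ᶠ R in atTop, S R ≤ c := by
  have hp₁ : 0 < p - 1 := sub_pos.2 hp
  have hN₁ : (0 : ℝ) ≤ N - 1 := sub_nonneg.2 (by exact_mod_cast hN)
  refine eventually_le_of_ge_imp_deriv_le (sub_pos.2 hc) ((eventually_gt_atTop r).mono hODE) ?_
  filter_upwards [eventually_gt_atTop r, eventually_gt_atTop 0] with R hr hR hcS
  have hdrag : 0 ≤ ((N : ℝ) - 1) / R * S R := by have := hpos R hr; positivity
  have hpow : c ^ (p / (p - 1)) ≤ S R ^ (p / (p - 1)) :=
    Real.rpow_le_rpow hc₀ hcS (by positivity)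
  linarith [mul_le_mul_of_nonneg_left hpow hp₁.le]

theorem eventually_ge_of_mul_rpow_lt_one (hN : 1 ≤ N) (hp : 1 < p)
    (hpos : ∀ R ∈ Ioi r, 0 < S R)
    (hODE : ∀ R ∈ Ioi r,
      HasDerivAt S (-(((N : ℝ) - 1) / R) * S R + 1 - (p - 1) * S R ^ (p / (p - 1))) R)
    {c : ℝ} (hc : (p - 1) * c ^ (p / (p - 1)) < 1) :
    ∀ᶠ R in atTop, c ≤ S R := by
  have hp₁ : 0 < p - 1 := sub_pos.2 hp
  have hN₁ : (0 : ℝ) ≤ N - 1 := sub_nonneg.2 (by exact_mod_cast hN)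
  set δ := (1 - (p - 1) * c ^ (p / (p - 1))) / 2 with hδ_def
  have hδ : 0 < δ := by positivity
  have hdrag_small : ∀ᶠ R in atTop, ((N : ℝ) - 1) / R * c < δ := by
    have : Tendsto (fun R : ℝ => ((N : ℝ) - 1) / R * c) atTop (𝓝 0) := by
      simpa using (tendsto_const_nhds.div_atTop tendsto_id).mul_const c
    exact this.eventually (gt_mem_nhds hδ)
  refine eventually_ge_of_le_imp_le_deriv hδ ((eventually_gt_atTop r).mono hODE) ?_
  filter_upwards [eventually_gt_atTop r, eventually_gt_atTop 0, hdrag_small]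
    with R hr hR hsmall hSc
  have hS := hpos R hr
  have hdrag : ((N : ℝ) - 1) / R * S R ≤ ((N : ℝ) - 1) / R * c :=
    mul_le_mul_of_nonneg_left hSc (by positivity)
  have hpow : S R ^ (p / (p - 1)) ≤ c ^ (p / (p - 1)) :=
    Real.rpow_le_rpow hS.le hSc (by positivity)
  linarith [mul_le_mul_of_nonneg_left hpow hp₁.le]

end

theorem Sp_limit_at_infinity_general (N : ℕ) (hN : 2 ≤ N) (p r : ℝ) (hp : 1 < p)
    (S : ℝ → ℝ) (hpos : ∀ R ∈ Ioi r, 0 < S R)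
    (hODE : ∀ R ∈ Ioi r,
      HasDerivAt S (-(((N : ℝ) - 1) / R) * S R + 1 - (p - 1) * S R ^ (p / (p - 1))) R) :
    Tendsto (fun R => S R ^ (p / (p - 1))) atTop (𝓝 (1 / (p - 1))) := by
  have hN₁ : 1 ≤ N := by omega
  have hp₁ : 0 < p - 1 := sub_pos.2 hp
  set q := p / (p - 1)
  have hq : 0 < q := by positivity
  set s₀ := (1 / (p - 1)) ^ q⁻¹
  have hs₀ : 0 < s₀ := by positivity
  have hs₀q : s₀ ^ q = 1 / (p - 1) := Real.rpow_inv_rpow (by positivity) hq.ne'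
  have hS : Tendsto S atTop (𝓝 s₀) := by
    refine tendsto_order.2 ⟨fun b hb => ?_, fun b hb => ?_⟩
    · obtain ⟨c, hbc, hcs⟩ := exists_between (max_lt hb hs₀)
      have hc₀ : 0 ≤ c := (le_max_right b 0).trans hbc.le
      have hcq : (p - 1) * c ^ q < 1 := (lt_div_iff₀' hp₁).1 <|
        hs₀q ▸ Real.rpow_lt_rpow hc₀ hcs hq
      filter_upwards [eventually_ge_of_mul_rpow_lt_one hN₁ hp hpos hODE hcq] with R hR
      exact ((le_max_left b 0).trans_lt hbc).trans_le hR
    · obtain ⟨c, hsc, hcb⟩ := exists_between hb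
      have hcq : 1 < (p - 1) * c ^ q := (div_lt_iff₀' hp₁).1 <|
        hs₀q ▸ Real.rpow_lt_rpow hs₀.le hsc hq
      filter_upwards [eventually_le_of_one_lt_mul_rpow hN₁ hp hpos hODE (hs₀.le.trans hsc.le) hcq]
        with R hR
      exact hR.trans_lt hcb
  rw [← hs₀q]
  exact (Real.continuousAt_rpow_const s₀ q (Or.inl hs₀.ne')).tendsto.comp hS

/-- Proposition 1.5, Step 2: if moreover `S(R) → +∞` as `R → r⁺`, then
`S(R)^{p/(p-1)} → 1/(p-1)` as `R → +∞`. -/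
theorem Sp_limit_at_infinity (N : ℕ) (hN : 2 ≤ N) (p r : ℝ) (hp : 1 < p) (hr : 0 < r)
    (S : ℝ → ℝ) (hpos : ∀ R ∈ Ioi r, 0 < S R)
    (hODE : ∀ R ∈ Ioi r,
      HasDerivAt S (-(((N : ℝ) - 1) / R) * S R + 1 - (p - 1) * S R ^ (p / (p - 1))) R)
    (htop : Tendsto S (𝓝[>] r) atTop) :
    Tendsto (fun R => S R ^ (p / (p - 1))) atTop (𝓝 (1 / (p - 1))) :=
  Sp_limit_at_infinity_general N hN p r hp S hpos hODE
end

section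
/- Fix r > 0, N ≥ 2, 1 < p < ∞. Let S : (r, ∞) → (0, ∞) be differentiable with S'(R) = −((N−1)/R)·S(R) + 1 − (p−1)·S(R)^{p/(p−1)} and S(R) → +∞ as R → r⁺, and define Q(R) = S(R)^{−p/(p−1)}·(1 − ((N−1)/R)·S(R)) + 1. Then lim_{R→+∞} Q(R) = p. -/
/-!
With `T = S ^ (-1/(p-1))` the Riccati equation for `S` becomes
`T' = 1 - T ^ p / (p - 1) + (N - 1) / ((p - 1) R) · T`, and `Q = 1 + T ^ p - (N - 1) / R · T`.
For large `R` the last term of the equation for `T` is a small perturbation of the autonomous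
field `1 - t ^ p / (p - 1)`, whose only positive zero `c = (p - 1) ^ (1/p)` is attracting: below
any level `m < c` the field is bounded below by a positive constant and above any level `m > c`
by a negative one, so `T` eventually crosses every such level and never comes back. Hence
`T → c` and `Q → 1 + c ^ p = p`.
-/

open Filter Topology Set

theorem eventually_ge_of_hasDerivAt_ge_of_le {g g' : ℝ → ℝ} {m η : ℝ} (hη : 0 < η)
    (hg : ∀ᶠ x in atTop, HasDerivAt g (g' x) x)
    (hgrow : ∀ᶠ x in atTop, g x ≤ m → η ≤ g' x) :
    ∀ᶠ x in atTop, m ≤ g x := by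
  obtain ⟨x₀, hx₀⟩ := eventually_atTop.1 (hg.and hgrow)
  have hcont : ∀ a b, x₀ ≤ a → ContinuousOn g (Icc a b) := fun a b ha x hx =>
    (hx₀ x (ha.trans hx.1)).1.continuousAt.continuousWithinAt
  have hderiv : ∀ a b, x₀ ≤ a → ∀ x ∈ Ico a b, HasDerivWithinAt g (g' x) (Ici x) x :=
    fun a b ha x hx => (hx₀ x (ha.trans hx.1)).1.hasDerivWithinAt
  obtain ⟨x₁, hx₀x₁, hx₁⟩ : ∃ x₁, x₀ ≤ x₁ ∧ m ≤ g x₁ := by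
    by_contra! hlt
    set x₁ := x₀ + (m - g x₀) / η
    have hx₀x₁ : x₀ ≤ x₁ :=
      le_add_of_nonneg_right (div_nonneg (sub_nonneg.2 (hlt x₀ le_rfl).le) hη.le)
    have hline : ∀ x, HasDerivAt (fun x => g x₀ + η * (x - x₀)) η x := fun x => by
      simpa using ((hasDerivAt_id x).sub_const x₀).const_mul η |>.const_add (g x₀)
    -- if `g` stayed below `m`, it would grow with slope `≥ η` and reach `m` at `x₁`
    have hreach := image_le_of_deriv_right_le_deriv_boundary
      (fun x _ => (hline x).continuousAt.continuousWithinAt) (fun x _ => (hline x).hasDerivWithinAt)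
      (by simp) (hcont x₀ x₁ le_rfl) (hderiv x₀ x₁ le_rfl)
      (fun x hx => (hx₀ x hx.1).2 (hlt x hx.1).le) ⟨hx₀x₁, le_rfl⟩
    have hline_x₁ : g x₀ + η * (x₁ - x₀) = m := by simp only [x₁]; field_simp; ring
    exact (hlt x₁ hx₀x₁).not_ge (hline_x₁ ▸ hreach)
  filter_upwards [eventually_ge_atTop x₁] with x hx
  refine image_le_of_deriv_right_lt_deriv_boundary' (f := fun _ => m) (f' := 0)
    continuousOn_const (fun _ _ => hasDerivWithinAt_const _ _ _) hx₁ (hcont x₁ x hx₀x₁)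
    (hderiv x₁ x hx₀x₁) (fun y hy hgy => ?_) ⟨hx, le_rfl⟩
  exact hη.trans_le ((hx₀ y (hx₀x₁.trans hy.1)).2 hgy.ge)

theorem tendsto_of_hasDerivAt_of_barriers {f f' : ℝ → ℝ} {c : ℝ}
    (hf : ∀ᶠ x in atTop, HasDerivAt f (f' x) x)
    (hlow : ∀ m < c, ∃ η > 0, ∀ᶠ x in atTop, f x ≤ m → η ≤ f' x)
    (hup : ∀ m > c, ∃ η > 0, ∀ᶠ x in atTop, m ≤ f x → f' x ≤ -η) :
    Tendsto f atTop (𝓝 c) := by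
  refine tendsto_order.2 ⟨fun a ha => ?_, fun b hb => ?_⟩
  · obtain ⟨m, ham, hmc⟩ := exists_between ha
    obtain ⟨η, hη, hgrow⟩ := hlow m hmc
    filter_upwards [eventually_ge_of_hasDerivAt_ge_of_le hη hf hgrow] with x hx
    exact ham.trans_le hx
  · obtain ⟨m, hcm, hmb⟩ := exists_between hb
    obtain ⟨η, hη, hdecay⟩ := hup m hcm
    have hf_neg : ∀ᶠ x in atTop, HasDerivAt (fun x => -f x) (-f' x) x :=
      hf.mono fun x hx => hx.neg
    have hgrow : ∀ᶠ x in atTop, -f x ≤ -m → η ≤ -f' x :=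
      hdecay.mono fun x hx hfx => le_neg.1 (hx (neg_le_neg_iff.1 hfx))
    filter_upwards [eventually_ge_of_hasDerivAt_ge_of_le hη hf_neg hgrow] with x hx
    exact (neg_le_neg_iff.1 hx).trans_lt hmb

theorem exists_pos_le_one_sub_rpow_add_mul {p m : ℝ} (hp : 1 < p) (hm : 0 < m)
    (hmp : m ^ p < p - 1) :
    ∃ η > 0, ∃ δ > 0, ∀ t e : ℝ, 0 < t → t ≤ m → |e| ≤ δ → η ≤ 1 - t ^ p / (p - 1) + e * t := by
  set η := (1 - m ^ p / (p - 1)) / 2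
  have hη : 0 < η := by
    have : m ^ p / (p - 1) < 1 := (div_lt_one (by linarith)).2 hmp
    simp only [η]; linarith
  refine ⟨η, hη, η / m, div_pos hη hm, fun t e ht htm he => ?_⟩
  have hpow : t ^ p / (p - 1) ≤ m ^ p / (p - 1) :=
    div_le_div_of_nonneg_right (Real.rpow_le_rpow ht.le htm (by linarith)) (by linarith)
  have hperturb : -η ≤ e * t := by
    have : |e| * t ≤ η / m * m := mul_le_mul he htm ht.le (div_pos hη hm).le
    rw [div_mul_cancel₀ _ hm.ne'] at this
    nlinarith [neg_abs_le e]
  simp only [η] at hperturb ⊢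
  linarith

theorem exists_pos_one_sub_rpow_add_mul_le_neg {p m : ℝ} (hp : 1 < p) (hm : 0 < m)
    (hmp : p - 1 < m ^ p) :
    ∃ η > 0, ∃ δ > 0, ∀ t e : ℝ, m ≤ t → |e| ≤ δ → 1 - t ^ p / (p - 1) + e * t ≤ -η := by
  set η := (m ^ p / (p - 1) - 1) / 2
  have hη : 0 < η := by
    have : 1 < m ^ p / (p - 1) := (one_lt_div (by linarith)).2 hmp
    simp only [η]; linarith
  refine ⟨η, hη, η / m, div_pos hη hm, fun t e hmt he => ?_⟩
  have ht : 0 < t := hm.trans_le hmt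
  have hsplit : ∀ s : ℝ, 0 < s → s ^ p = s * s ^ (p - 1) := fun s hs => by
    rw [Real.rpow_sub_one hs.ne', mul_div_cancel₀ _ hs.ne']
  have hmono : m ^ (p - 1) / (p - 1) ≤ t ^ (p - 1) / (p - 1) :=
    div_le_div_of_nonneg_right (Real.rpow_le_rpow hm.le hmt (by linarith)) (by linarith)
  set A := t ^ (p - 1) / (p - 1)
  set B := m ^ (p - 1) / (p - 1)
  have hmB : m * B = 1 + 2 * η := by
    simp only [η, B, hsplit m hm, mul_div_assoc]; ring
  have hmη : m * (η / m) = η := mul_div_cancel₀ _ hm.ne'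
  have hslope : 0 ≤ A - η / m := by nlinarith
  -- `t (A - η/m)` is increasing in `t` and `A`, so its minimum over `t ≥ m` is at `t = m`
  have hmin : m * (B - η / m) ≤ t * (A - η / m) := by
    nlinarith [mul_nonneg (sub_nonneg.2 hmt) hslope]
  have hperturb : e * t ≤ η / m * t := by
    nlinarith [le_abs_self e]
  have htp : t ^ p / (p - 1) = t * A := by simp only [A, hsplit t ht, mul_div_assoc]
  rw [htp]
  linarith

section
variable {p s : ℝ}

theorem Real.rpow_neg_div_sub_one (hp : p ≠ 1) (hs : 0 < s) :
    s ^ (-(p / (p - 1))) = (s ^ (-(p - 1)⁻¹)) ^ p := by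
  have : p - 1 ≠ 0 := sub_ne_zero.2 hp
  rw [← Real.rpow_mul hs.le]; congr 1; field_simp

theorem Real.rpow_neg_div_sub_one_mul_self (hp : p ≠ 1) (hs : 0 < s) :
    s ^ (-(p / (p - 1))) * s = s ^ (-(p - 1)⁻¹) := by
  have : p - 1 ≠ 0 := sub_ne_zero.2 hp
  rw [← Real.rpow_add_one hs.ne']; congr 1; field_simp; ring

end

theorem HasDerivAt.rpow_neg_inv_sub_one {S : ℝ → ℝ} {p a R : ℝ} (hp : p ≠ 1) (hS : 0 < S R)
    (h : HasDerivAt S (-a * S R + 1 - (p - 1) * S R ^ (p / (p - 1))) R) :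
    HasDerivAt (fun x => S x ^ (-(p - 1)⁻¹))
      (1 - (S R ^ (-(p - 1)⁻¹)) ^ p / (p - 1) + a / (p - 1) * S R ^ (-(p - 1)⁻¹)) R := by
  have hp1 : p - 1 ≠ 0 := sub_ne_zero.2 hp
  convert h.rpow_const (p := -(p - 1)⁻¹) (Or.inl hS.ne') using 1
  have hexp : -(p - 1)⁻¹ - 1 = -(p / (p - 1)) := by field_simp; ring
  have hinv : S R ^ (-(p / (p - 1))) * S R ^ (p / (p - 1)) = 1 := by
    rw [Real.rpow_neg hS.le, inv_mul_cancel₀ (Real.rpow_pos_of_pos hS _).ne']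
  rw [hexp, ← Real.rpow_neg_div_sub_one hp hS, ← Real.rpow_neg_div_sub_one_mul_self hp hS]
  field_simp
  linear_combination (1 - p) * hinv

theorem tendsto_rpow_inv_of_hasDerivAt_one_sub_rpow_add {p : ℝ} (hp : 1 < p) {T ε : ℝ → ℝ}
    (hε : Tendsto ε atTop (𝓝 0)) (hpos : ∀ᶠ x in atTop, 0 < T x)
    (hT : ∀ᶠ x in atTop, HasDerivAt T (1 - T x ^ p / (p - 1) + ε x * T x) x) :
    Tendsto T atTop (𝓝 ((p - 1) ^ p⁻¹)) := by
  have hp1 : 0 < p - 1 := sub_pos.2 hp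
  have hsmall : ∀ δ > 0, ∀ᶠ x in atTop, |ε x| ≤ δ := fun δ hδ =>
    (hε.eventually (Metric.closedBall_mem_nhds 0 hδ)).mono fun x hx => by
      simpa [Real.dist_eq] using hx
  refine tendsto_of_hasDerivAt_of_barriers hT (fun m hm => ?_) (fun m hm => ?_)
  · rcases le_or_gt m 0 with hm0 | hm0
    · exact ⟨1, one_pos, hpos.mono fun x hx hTm => absurd (hx.trans_le hTm) hm0.not_gt⟩
    obtain ⟨η, hη, δ, hδ, hbound⟩ := exists_pos_le_one_sub_rpow_add_mul hp hm0
      ((Real.lt_rpow_inv_iff_of_pos hm0.le hp1.le (by linarith)).1 hm)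
    exact ⟨η, hη, (hpos.and (hsmall δ hδ)).mono fun x hx hTm => hbound _ _ hx.1 hTm hx.2⟩
  · have hm0 : 0 < m := (Real.rpow_pos_of_pos hp1 _).trans hm
    obtain ⟨η, hη, δ, hδ, hbound⟩ := exists_pos_one_sub_rpow_add_mul_le_neg hp hm0
      ((Real.rpow_inv_lt_iff_of_pos hp1.le hm0.le (by linarith)).1 hm)
    exact ⟨η, hη, (hsmall δ hδ).mono fun x hx hmT => hbound _ _ hmT hx⟩

theorem Q_limit_at_infinity_general (N : ℕ) (p r : ℝ) (hp : 1 < p)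
    (S : ℝ → ℝ) (hpos : ∀ R ∈ Ioi r, 0 < S R)
    (hODE : ∀ R ∈ Ioi r,
      HasDerivAt S (-(((N : ℝ) - 1) / R) * S R + 1 - (p - 1) * S R ^ (p / (p - 1))) R)
    (Q : ℝ → ℝ)
    (hQ : ∀ R, Q R = S R ^ (-(p / (p - 1))) * (1 - ((N : ℝ) - 1) / R * S R) + 1) :
    Tendsto Q atTop (𝓝 p) := by
  set T : ℝ → ℝ := fun R => S R ^ (-(p - 1)⁻¹)
  have hr : ∀ᶠ R in atTop, R ∈ Ioi r := eventually_gt_atTop r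
  have hdecay : Tendsto (fun R : ℝ => ((N : ℝ) - 1) / R) atTop (𝓝 0) :=
    tendsto_const_nhds.div_atTop tendsto_id
  have hT : Tendsto T atTop (𝓝 ((p - 1) ^ p⁻¹)) :=
    tendsto_rpow_inv_of_hasDerivAt_one_sub_rpow_add hp
      (by simpa using hdecay.div_const (p - 1))
      (hr.mono fun R hR => Real.rpow_pos_of_pos (hpos R hR) _)
      (hr.mono fun R hR => (hODE R hR).rpow_neg_inv_sub_one hp.ne' (hpos R hR))
  have hQT : (fun R => 1 + T R ^ p - ((N : ℝ) - 1) / R * T R) =ᶠ[atTop] Q :=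
    hr.mono fun R hR => by
      rw [hQ, mul_one_sub, ← mul_assoc, mul_comm _ (((N : ℝ) - 1) / R), mul_assoc,
        Real.rpow_neg_div_sub_one_mul_self hp.ne' (hpos R hR),
        Real.rpow_neg_div_sub_one hp.ne' (hpos R hR)]
      ring
  have hlim : Tendsto (fun R => 1 + T R ^ p - ((N : ℝ) - 1) / R * T R) atTop
      (𝓝 (1 + ((p - 1) ^ p⁻¹) ^ p - 0 * (p - 1) ^ p⁻¹)) :=
    (tendsto_const_nhds.add (hT.rpow_const (Or.inr (by linarith)))).sub (hdecay.mul hT)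
  rw [Real.rpow_inv_rpow (by linarith) (by linarith), zero_mul, sub_zero, add_sub_cancel] at hlim
  exact hlim.congr' hQT

/-- Proposition 1.5, second half: `Q(R) → p` as `R → +∞`, where
`Q(R) = S(R)^{-p/(p-1)} (1 - ((N-1)/R) S(R)) + 1`. -/
theorem Q_limit_at_infinity (N : ℕ) (hN : 2 ≤ N) (p r : ℝ) (hp : 1 < p) (hr : 0 < r)
    (S : ℝ → ℝ) (hpos : ∀ R ∈ Ioi r, 0 < S R)
    (hODE : ∀ R ∈ Ioi r,
      HasDerivAt S (-(((N : ℝ) - 1) / R) * S R + 1 - (p - 1) * S R ^ (p / (p - 1))) R)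
    (htop : Tendsto S (𝓝[>] r) atTop)
    (Q : ℝ → ℝ)
    (hQ : ∀ R, Q R = S R ^ (-(p / (p - 1))) * (1 - ((N : ℝ) - 1) / R * S R) + 1) :
    Tendsto Q atTop (𝓝 p) :=
  Q_limit_at_infinity_general N p r hp S hpos hODE Q hQ
end

section
/- Let r > 0, R > r, N ≥ 2, 1 < p < ∞, and let u₀ : [r, ∞) → [0, ∞) be a C² radial profile with u₀(r) = 0, u₀'(r) = 1, u₀ > 0 on (r, ∞), satisfying the radial p-Laplace equation (s^{N−1} |u₀'|^{p−2} u₀')' = s^{N−1} u₀^{p−1} for s > r, and suppose u₀'(s)^{p−1} = S_p · u₀(s)^{p−1} holds at s = R for a constant S_p > 0 (i.e., u₀ restricted to B_R is a first eigenfunction, so this holds for all R > r). Then the map R ↦ S_p(R) := (u₀'(R)/u₀(R))^{p−1} is differentiable on (r, ∞) and satisfies ∂S_p/∂R = 1 − ((N−1)/R)·S_p − (p−1)·S_p^{p/(p−1)}. -/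
open Filter Topology Set

/-!
Write `S = F / G` with `F s = s^(N-1) u₀'(s)^(p-1)` and `G s = s^(N-1) u₀(s)^(p-1)`.
The radial equation says exactly `F' = G`, so `S' = 1 - S · G'/G`, and the logarithmic
derivative is `G'/G = (N-1)/R + (p-1) u₀'/u₀`. Finally `S · u₀'/u₀ = S^(p/(p-1))`.
-/

theorem HasDerivAt.div_of_deriv_eq_denom {𝕜 : Type*} [NontriviallyNormedField 𝕜]
    {F G : 𝕜 → 𝕜} {L x : 𝕜} (hF : HasDerivAt F (G x) x) (hG : HasDerivAt G (L * G x) x)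
    (hx : G x ≠ 0) :
    HasDerivAt (fun y => F y / G y) (1 - F x / G x * L) x :=
  (hF.div hG hx).congr_deriv (by field_simp)

theorem HasDerivAt.pow_mul_rpow {u : ℝ → ℝ} {u' s : ℝ} (hu : HasDerivAt u u' s) (n : ℕ)
    (q : ℝ) (hs : s ≠ 0) (hus : 0 < u s) :
    HasDerivAt (fun t => t ^ n * u t ^ q) ((n / s + q * (u' / u s)) * (s ^ n * u s ^ q)) s := by
  refine ((hasDerivAt_pow n s).mul (hu.rpow_const (p := q) (Or.inl hus.ne'))).congr_deriv ?_
  rw [Real.rpow_sub_one hus.ne']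
  rcases n with _ | n
  · simp only [CharP.cast_eq_zero, zero_tsub, pow_zero, mul_one, zero_mul, one_mul, zero_add,
      zero_div]
    ring
  · simp only [Nat.add_sub_cancel, pow_succ]
    field_simp

theorem Real.rpow_rpow_div_sub_one {x : ℝ} (hx : 0 < x) {p : ℝ} (hp : p ≠ 1) :
    (x ^ (p - 1)) ^ (p / (p - 1)) = x ^ (p - 1) * x := by
  have hp1 : p - 1 ≠ 0 := sub_ne_zero.mpr hp
  rw [← Real.rpow_mul hx.le, mul_div_cancel₀ _ hp1, ← Real.rpow_add_one hx.ne', sub_add_cancel]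

theorem Sp_satisfies_ODE_general (N : ℕ) (hN : 2 ≤ N) (p r : ℝ) (hp : 1 < p) (hr : 0 < r)
    (u₀ : ℝ → ℝ) (hC : ContDiffOn ℝ 2 u₀ (Ici r))
    (hupos : ∀ s ∈ Ioi r, 0 < u₀ s) (hu'pos : ∀ s ∈ Ioi r, 0 < deriv u₀ s)
    (hODE : ∀ s ∈ Ioi r,
      HasDerivAt (fun t => t ^ (N - 1) * deriv u₀ t ^ (p - 1))
        (s ^ (N - 1) * u₀ s ^ (p - 1)) s) :
    ∀ R ∈ Ioi r,
      HasDerivAt (fun R => (deriv u₀ R / u₀ R) ^ (p - 1))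
        (1 - ((N : ℝ) - 1) / R * ((deriv u₀ R / u₀ R) ^ (p - 1))
          - (p - 1) * ((deriv u₀ R / u₀ R) ^ (p - 1)) ^ (p / (p - 1))) R := by
  intro R hR
  have hR0 : 0 < R := hr.trans hR
  have huR : 0 < u₀ R := hupos R hR
  have hu : HasDerivAt u₀ (deriv u₀ R) R :=
    ((hC.differentiableOn (by norm_num)).differentiableAt (Ici_mem_nhds hR)).hasDerivAt
  have hquot : ∀ s ∈ Ioi r, (deriv u₀ s / u₀ s) ^ (p - 1) =
      s ^ (N - 1) * deriv u₀ s ^ (p - 1) / (s ^ (N - 1) * u₀ s ^ (p - 1)) := fun s hs => by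
    rw [Real.div_rpow (hu'pos s hs).le (hupos s hs).le,
      mul_div_mul_left _ _ (pow_ne_zero _ (hr.trans hs).ne')]
  have hS := ((hODE R hR).div_of_deriv_eq_denom
    (hu.pow_mul_rpow (N - 1) (p - 1) hR0.ne' huR)
    (by positivity)).congr_of_eventuallyEq (eventually_of_mem (Ioi_mem_nhds hR) hquot)
  rw [← hquot R hR, Nat.cast_sub (by omega : 1 ≤ N)] at hS
  rw [Real.rpow_rpow_div_sub_one (div_pos (hu'pos R hR) huR) hp.ne']
  exact hS.congr_deriv (by rw [Nat.cast_one]; ring)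

/-- Proposition 1.5, Step 1: the map `R ↦ S_p(R) = (u₀'(R)/u₀(R))^{p-1}` built
from the positive radial profile `u₀` (which solves the radial p-Laplace
equation `(s^{N-1} (u₀')^{p-1})' = s^{N-1} u₀^{p-1}` with `u₀(r) = 0`,
`u₀'(r) = 1`) is differentiable and satisfies the Riccati-type ODE
`S_p' = 1 - ((N-1)/R) S_p - (p-1) S_p^{p/(p-1)}`. -/
theorem Sp_satisfies_ODE (N : ℕ) (hN : 2 ≤ N) (p r : ℝ) (hp : 1 < p) (hr : 0 < r)
    (u₀ : ℝ → ℝ) (hC : ContDiffOn ℝ 2 u₀ (Ici r))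
    (h0 : u₀ r = 0) (h1 : deriv u₀ r = 1)
    (hupos : ∀ s ∈ Ioi r, 0 < u₀ s) (hu'pos : ∀ s ∈ Ioi r, 0 < deriv u₀ s)
    (hODE : ∀ s ∈ Ioi r,
      HasDerivAt (fun t => t ^ (N - 1) * deriv u₀ t ^ (p - 1))
        (s ^ (N - 1) * u₀ s ^ (p - 1)) s) :
    ∀ R ∈ Ioi r,
      HasDerivAt (fun R => (deriv u₀ R / u₀ R) ^ (p - 1))
        (1 - ((N : ℝ) - 1) / R * ((deriv u₀ R / u₀ R) ^ (p - 1))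
          - (p - 1) * ((deriv u₀ R / u₀ R) ^ (p - 1)) ^ (p / (p - 1))) R :=
  Sp_satisfies_ODE_general N hN p r hp hr u₀ hC hupos hu'pos hODE
end
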